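/- arXiv:2503.18451 — 4 statements merged into one kernel-verified Lean document; each statement's English description precedes it below -/
import Mathlib

section
/- Let $(p_n)_{n\geq 0}$ be a critical probability distribution (mean $1$) satisfying $\lim_{n\to\infty} n^\beta \sum_{k=n}^\infty p_k = c_\beta > 0$ for some $\beta \in (1,2)$, and let $F(z) = z - 1 + \sum_{n=0}^\infty p_n(1-z)^n$. Then $F(z) \sim c_\beta \frac{\Gamma(2-\beta)}{\beta-1} z^\beta$ as $z \downarrow 0$, i.e. $\lim_{z\downarrow 0} F(z)/z^\beta = c_\beta \Gamma(2-\beta)/(\beta-1)$. -/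
open Filter Real MeasureTheory Set

lemma ceil_measurable : Measurable (fun u : ℝ => (⌈u⌉₊ : ℕ)) :=
  Nat.ceil_mono.measurable

lemma step_lintegral (w : ℕ → ENNReal) :
    ∫⁻ u in Ioi (0:ℝ), w ⌈u⌉₊ = ∑' i : ℕ, w (i+1) := by
  have hset : Ioi (0:ℝ) = ⋃ i : ℕ, Ioc (i : ℝ) (i+1) := by
    ext u
    simp only [mem_Ioi, mem_iUnion, mem_Ioc]
    constructor
    · intro hu
      refine ⟨⌈u⌉₊ - 1, ?_, ?_⟩
      · have h1 : 1 ≤ ⌈u⌉₊ := Nat.one_le_ceil_iff.mpr hu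
        have h2 : (⌈u⌉₊ : ℝ) < u + 1 := Nat.ceil_lt_add_one (le_of_lt hu)
        push_cast [Nat.cast_sub h1]
        linarith
      · have h1 : 1 ≤ ⌈u⌉₊ := Nat.one_le_ceil_iff.mpr hu
        have h2 : u ≤ (⌈u⌉₊ : ℝ) := Nat.le_ceil u
        push_cast [Nat.cast_sub h1]
        linarith
    · rintro ⟨i, h1, h2⟩
      exact lt_of_le_of_lt (Nat.cast_nonneg i) h1
  rw [hset, lintegral_iUnion]
  · congr 1
    ext i
    have hcongr : ∀ u ∈ Ioc (i:ℝ) (i+1), w ⌈u⌉₊ = w (i+1) := by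
      intro u hu
      congr 1
      rw [Nat.ceil_eq_iff (Nat.succ_ne_zero i)]
      push_cast
      exact ⟨hu.1, hu.2⟩
    rw [setLIntegral_congr_fun measurableSet_Ioc hcongr]
    simp [Real.volume_Ioc]
  · exact fun i => measurableSet_Ioc
  · intro i j hij
    simp only [Function.onFun]
    rw [Set.Ioc_disjoint_Ioc]
    rcases hij.lt_or_gt with h | h
    · have : (i:ℝ) + 1 ≤ j := by exact_mod_cast h
      simp only [min_le_iff, le_max_iff]
      right; left; linarith
    · have : (j:ℝ) + 1 ≤ i := by exact_mod_cast h
      simp only [min_le_iff, le_max_iff]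
      left; right; linarith

lemma step_integrable (w : ℕ → ℝ) (hw : ∀ n, 0 ≤ w n)
    (hsum : Summable (fun i => w (i+1))) :
    IntegrableOn (fun u : ℝ => w ⌈u⌉₊) (Ioi 0) := by
  have hmeas : Measurable (fun u : ℝ => w ⌈u⌉₊) :=
    (measurable_from_top).comp ceil_measurable
  refine ⟨hmeas.aestronglyMeasurable, ?_⟩
  rw [hasFiniteIntegral_iff_norm]
  have : ∀ u : ℝ, ENNReal.ofReal ‖w ⌈u⌉₊‖ = ENNReal.ofReal (w ⌈u⌉₊) := by
    intro u; rw [Real.norm_of_nonneg (hw _)]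
  simp_rw [this]
  rw [step_lintegral (fun n => ENNReal.ofReal (w n)),
    ← ENNReal.ofReal_tsum_of_nonneg (fun i => hw _) hsum]
  exact ENNReal.ofReal_lt_top

lemma step_integral (w : ℕ → ℝ) (hw : ∀ n, 0 ≤ w n)
    (hsum : Summable (fun i => w (i+1))) :
    ∫ u in Ioi (0:ℝ), w ⌈u⌉₊ = ∑' i : ℕ, w (i+1) := by
  have hmeas : Measurable (fun u : ℝ => w ⌈u⌉₊) :=
    (measurable_from_top).comp ceil_measurable
  rw [integral_eq_lintegral_of_nonneg_ae
      (Filter.Eventually.of_forall (fun u => hw _)) hmeas.aestronglyMeasurable]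
  rw [step_lintegral (fun n => ENNReal.ofReal (w n)),
    ← ENNReal.ofReal_tsum_of_nonneg (fun i => hw _) hsum,
    ENNReal.toReal_ofReal (tsum_nonneg (fun i => hw _))]

lemma summable_of_tsum_ne_zero {f : ℕ → ℝ} (h : ∑' n, f n ≠ 0) : Summable f := by
  by_contra hs
  exact h (tsum_eq_zero_of_not_summable hs)

lemma tail_ite_tsum (p : ℕ → ℝ) (hsum : Summable p) (i : ℕ) :
    ∑' n, (if i < n then p n else 0) = ∑' k, p (i + 1 + k) := by
  have h1 := (Summable.sum_add_tsum_nat_add (f := fun n => if i < n then p n else 0) (i+1) ?_)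
  · have h2 : ∑ n ∈ Finset.range (i+1), (if i < n then p n else 0) = 0 := by
      apply Finset.sum_eq_zero
      intro n hn
      rw [Finset.mem_range] at hn
      simp [Nat.not_lt.mpr (Nat.lt_succ_iff.mp hn)]
    rw [← h1, h2, zero_add]
    apply tsum_congr
    intro k
    have : i < k + (i+1) := by omega
    simp only [this, if_true]
    congr 1
    omega
  · have := hsum.indicator {n | i < n}
    apply this.congr
    intro n
    simp [Set.indicator_apply, Set.mem_setOf_eq]

lemma swap_identity (p : ℕ → ℝ) (hp : ∀ n, 0 ≤ p n) (hpsum : Summable p)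
    (hnp : Summable (fun n : ℕ => (n:ℝ) * p n))
    (hqs : Summable (fun i : ℕ => ∑' k, p (i + 1 + k)))
    (z : ℝ) (hz0 : 0 < z) (hz1 : z < 1) :
    ∑' n, p n * (∑ i ∈ Finset.range n, (1 - (1-z)^i)) =
      ∑' i : ℕ, (1 - (1-z)^i) * ∑' k, p (i + 1 + k) := by
  set g : ℕ → ℝ := fun i => 1 - (1-z)^i with hg_def
  have hz01 : (0:ℝ) ≤ 1 - z := by linarith
  have hz11 : (1:ℝ) - z ≤ 1 := by linarith
  have hg0 : ∀ i, 0 ≤ g i := fun i => by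
    simp only [hg_def, sub_nonneg]
    exact pow_le_one₀ hz01 hz11
  have hg1 : ∀ i, g i ≤ 1 := fun i => by
    simp only [hg_def]
    have : (0:ℝ) ≤ (1-z)^i := pow_nonneg hz01 i
    linarith
  set q : ℕ → ℝ := fun i => ∑' k, p (i + 1 + k) with hq_def
  have hq0 : ∀ i, 0 ≤ q i := fun i => tsum_nonneg (fun k => hp _)
  -- LHS summability
  have hLsum : Summable (fun n => p n * (∑ i ∈ Finset.range n, g i)) := by
    apply hnp.of_nonneg_of_le
    · intro n
      exact mul_nonneg (hp n) (Finset.sum_nonneg fun i _ => hg0 i)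
    · intro n
      have : (∑ i ∈ Finset.range n, g i) ≤ n := by
        calc (∑ i ∈ Finset.range n, g i) ≤ ∑ i ∈ Finset.range n, 1 :=
              Finset.sum_le_sum (fun i _ => hg1 i)
        _ = n := by simp
      calc p n * (∑ i ∈ Finset.range n, g i) ≤ p n * n :=
            mul_le_mul_of_nonneg_left this (hp n)
        _ = (n:ℝ) * p n := mul_comm _ _
  -- RHS summability
  have hRsum : Summable (fun i => g i * q i) := by
    apply hqs.of_nonneg_of_le
    · intro i; exact mul_nonneg (hg0 i) (hq0 i)
    · intro i
      calc g i * q i ≤ 1 * q i := mul_le_mul_of_nonneg_right (hg1 i) (hq0 i)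
      _ = q i := one_mul _
  -- move to ENNReal
  set P : ℕ → ENNReal := fun n => ENNReal.ofReal (p n) with hP_def
  set G : ℕ → ENNReal := fun i => ENNReal.ofReal (g i) with hG_def
  have key : ∑' n, P n * (∑ i ∈ Finset.range n, G i) = ∑' i, G i * ENNReal.ofReal (q i) := by
    have step1 : ∀ n : ℕ, (∑ i ∈ Finset.range n, G i) =
        ∑' i : ℕ, (if i < n then G i else 0) := by
      intro n
      rw [tsum_eq_sum (s := Finset.range n) (fun i hi => by
        rw [if_neg (by simpa using hi)])]
      apply Finset.sum_congr rfl
      intro i hi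
      rw [if_pos (Finset.mem_range.mp hi)]
    calc ∑' n, P n * (∑ i ∈ Finset.range n, G i)
        = ∑' n, ∑' i, (if i < n then P n * G i else 0) := by
          apply tsum_congr; intro n
          rw [step1, ← ENNReal.tsum_mul_left]
          apply tsum_congr; intro i
          by_cases h : i < n <;> simp [h]
      _ = ∑' i, ∑' n, (if i < n then P n * G i else 0) := ENNReal.tsum_comm
      _ = ∑' i, G i * ∑' n, (if i < n then P n else 0) := by
          apply tsum_congr; intro i
          rw [← ENNReal.tsum_mul_left]
          apply tsum_congr; intro n
          by_cases h : i < n <;> simp [h, mul_comm]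
      _ = ∑' i, G i * ENNReal.ofReal (q i) := by
          apply tsum_congr; intro i
          congr 1
          rw [show (fun n => if i < n then P n else 0) =
              (fun n => ENNReal.ofReal (if i < n then p n else 0)) by
            funext n; by_cases h : i < n <;> simp [h, hP_def]]
          rw [← ENNReal.ofReal_tsum_of_nonneg (fun n => by by_cases h : i < n <;> simp [h, hp n])
            (hpsum.indicator {n | i < n} |>.congr (fun n => by
              simp [Set.indicator_apply, Set.mem_setOf_eq]))]
          rw [tail_ite_tsum p hpsum i]
  -- transfer back
  have hL : ENNReal.ofReal (∑' n, p n * (∑ i ∈ Finset.range n, g i)) =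
      ∑' n, P n * (∑ i ∈ Finset.range n, G i) := by
    rw [ENNReal.ofReal_tsum_of_nonneg (fun n =>
      mul_nonneg (hp n) (Finset.sum_nonneg fun i _ => hg0 i)) hLsum]
    apply tsum_congr; intro n
    rw [ENNReal.ofReal_mul (hp n)]
    congr 1
    exact ENNReal.ofReal_sum_of_nonneg (fun i _ => hg0 i)
  have hR : ENNReal.ofReal (∑' i, g i * q i) = ∑' i, G i * ENNReal.ofReal (q i) := by
    rw [ENNReal.ofReal_tsum_of_nonneg (fun i => mul_nonneg (hg0 i) (hq0 i)) hRsum]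
    apply tsum_congr; intro i
    exact ENNReal.ofReal_mul (hg0 i)
  have := hL.trans (key.trans hR.symm)
  exact (ENNReal.ofReal_eq_ofReal_iff
    (tsum_nonneg fun n => mul_nonneg (hp n) (Finset.sum_nonneg fun i _ => hg0 i))
    (tsum_nonneg fun i => mul_nonneg (hg0 i) (hq0 i))).mp this

lemma integrableOn_min_rpow {β : ℝ} (hβ : 1 < β) (hβ2 : β < 2) :
    IntegrableOn (fun v : ℝ => min (v ^ (1-β)) (v ^ (-β))) (Ioi 0) := by
  have hmeas : Measurable (fun v : ℝ => min (v ^ (1-β)) (v ^ (-β))) :=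
    (measurable_id.pow_const _ |>.min (measurable_id.pow_const _))
  have h1 : IntegrableOn (fun v : ℝ => min (v ^ (1-β)) (v ^ (-β))) (Ioc 0 1) := by
    have hint : IntegrableOn (fun v : ℝ => v ^ (1-β)) (Ioc (0:ℝ) 1) := by
      rw [integrableOn_Ioc_iff_integrableOn_Ioo]
      exact (intervalIntegral.integrableOn_Ioo_rpow_iff zero_lt_one).mpr (by linarith)
    apply hint.mono' hmeas.aestronglyMeasurable.restrict
    filter_upwards [ae_restrict_mem measurableSet_Ioc] with v hv
    rw [Real.norm_of_nonneg (le_min (Real.rpow_nonneg hv.1.le _) (Real.rpow_nonneg hv.1.le _))]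
    exact min_le_left _ _
  have h2 : IntegrableOn (fun v : ℝ => min (v ^ (1-β)) (v ^ (-β))) (Ioi 1) := by
    have hint : IntegrableOn (fun v : ℝ => v ^ (-β)) (Ioi (1:ℝ)) :=
      integrableOn_Ioi_rpow_of_lt (by linarith) zero_lt_one
    apply hint.mono' hmeas.aestronglyMeasurable.restrict
    filter_upwards [ae_restrict_mem measurableSet_Ioi] with v hv
    have hv0 : (0:ℝ) < v := lt_trans zero_lt_one hv
    rw [Real.norm_of_nonneg (le_min (Real.rpow_nonneg hv0.le _) (Real.rpow_nonneg hv0.le _))]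
    exact min_le_right _ _
  have : Ioc (0:ℝ) 1 ∪ Ioi 1 = Ioi 0 := Set.Ioc_union_Ioi_eq_Ioi zero_le_one
  rw [← this]
  exact h1.union h2

lemma one_sub_exp_le (v : ℝ) : 1 - Real.exp (-v) ≤ v := by
  have := Real.add_one_le_exp (-v)
  linarith

lemma integrableOn_target {β : ℝ} (hβ : 1 < β) (hβ2 : β < 2) :
    IntegrableOn (fun v : ℝ => (1 - Real.exp (-v)) * v ^ (-β)) (Ioi 0) := by
  apply (integrableOn_min_rpow hβ hβ2).mono'
  · exact ((continuous_const.sub (Real.continuous_exp.comp continuous_neg)).measurable.mul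
      (measurable_id.pow_const _)).aestronglyMeasurable.restrict
  · filter_upwards [ae_restrict_mem measurableSet_Ioi] with v hv
    have hv0 : (0:ℝ) < v := hv
    have he : 0 ≤ 1 - Real.exp (-v) := by
      have : Real.exp (-v) ≤ Real.exp 0 := Real.exp_le_exp.mpr (by linarith)
      simpa using this
    rw [Real.norm_of_nonneg (mul_nonneg he (Real.rpow_nonneg hv0.le _))]
    apply le_min
    · calc (1 - Real.exp (-v)) * v ^ (-β) ≤ v * v ^ (-β) :=
          mul_le_mul_of_nonneg_right (one_sub_exp_le v) (Real.rpow_nonneg hv0.le _)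
      _ = v ^ (1-β) := by
          rw [show (1:ℝ)-β = 1 + (-β) by ring, Real.rpow_add hv0, Real.rpow_one]
    · have h1 : 1 - Real.exp (-v) ≤ 1 := by
        have : 0 < Real.exp (-v) := Real.exp_pos _
        linarith
      calc (1 - Real.exp (-v)) * v ^ (-β) ≤ 1 * v ^ (-β) :=
            mul_le_mul_of_nonneg_right h1 (Real.rpow_nonneg hv0.le _)
      _ = v ^ (-β) := one_mul _

lemma model_integral {β : ℝ} (hβ : 1 < β) (hβ2 : β < 2) :
    ∫ v in Ioi (0:ℝ), (1 - Real.exp (-v)) * v ^ (-β) =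
      Real.Gamma (2-β) / (β-1) := by
  set f : ℝ → ℝ := fun v => (1/(1-β)) * ((1 - Real.exp (-v)) * v ^ (1-β)) with hf_def
  set f' : ℝ → ℝ := fun v => (1 - Real.exp (-v)) * v ^ (-β)
    + (1/(1-β)) * (Real.exp (-v) * v ^ ((2-β)-1)) with hf'_def
  have hβ1 : (1:ℝ) - β ≠ 0 := by intro h; linarith [sub_eq_zero.mp h]
  have hf0 : f 0 = 0 := by simp [hf_def]
  have hexple : ∀ v : ℝ, 0 ≤ v → 0 ≤ 1 - Real.exp (-v) := by
    intro v hv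
    have : Real.exp (-v) ≤ Real.exp 0 := Real.exp_le_exp.mpr (by linarith)
    simpa using this
  -- derivative on Ioi 0
  have hderiv : ∀ v ∈ Ioi (0:ℝ), HasDerivAt f (f' v) v := by
    intro v hv
    have hv0 : (0:ℝ) < v := hv
    have h1 : HasDerivAt (fun v : ℝ => 1 - Real.exp (-v)) (Real.exp (-v)) v := by
      have := ((Real.hasDerivAt_exp (-v)).comp v (hasDerivAt_neg v))
      exact ((hasDerivAt_const v (1:ℝ)).sub this).congr_deriv (by simp)
    have h2 : HasDerivAt (fun v : ℝ => v ^ (1-β)) ((1-β) * v ^ ((1-β)-1)) v :=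
      Real.hasDerivAt_rpow_const (Or.inl hv0.ne')
    have h3 := (h1.mul h2).const_mul (1/(1-β))
    refine HasDerivAt.congr_deriv (f := f) h3 ?_
    symm
    have e1 : (1-β) - 1 = -β := by ring
    have e2 : (2-β) - 1 = 1 - β := by ring
    have e3 : v ^ (1-β) = v * v ^ (-β) := by
      rw [show (1:ℝ)-β = 1 + (-β) by ring, Real.rpow_add hv0, Real.rpow_one]
    rw [hf'_def]
    simp only [e1, e2, e3]
    field_simp
    ring
  -- continuity at 0 from the right
  have hcont : ContinuousWithinAt f (Ici 0) 0 := by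
    rw [ContinuousWithinAt, hf0]
    have hb : Tendsto (fun v : ℝ => (1/(β-1)) * v ^ (2-β)) (nhdsWithin 0 (Ici 0)) (nhds 0) := by
      have : Tendsto (fun v : ℝ => v ^ (2-β)) (nhds 0) (nhds ((0:ℝ) ^ (2-β))) :=
        (Real.continuousAt_rpow_const 0 (2-β) (Or.inr (by linarith))).tendsto
      rw [Real.zero_rpow (by linarith)] at this
      simpa using (this.const_mul (1/(β-1))).mono_left nhdsWithin_le_nhds
    apply squeeze_zero_norm' _ hb
    filter_upwards [self_mem_nhdsWithin] with v (hv : v ∈ Ici 0)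
    rcases eq_or_lt_of_le (show (0:ℝ) ≤ v from hv) with h0 | hv0
    · rw [← h0, hf0]
      simp only [norm_zero]
      rw [Real.zero_rpow (by linarith : (2:ℝ)-β ≠ 0)]
      simp
    · have he := hexple v hv0.le
      have hnn : 0 ≤ (1 - Real.exp (-v)) * v ^ (1-β) :=
        mul_nonneg he (Real.rpow_nonneg hv0.le _)
      have hle : (1 - Real.exp (-v)) * v ^ (1-β) ≤ v ^ (2-β) := by
        calc (1 - Real.exp (-v)) * v ^ (1-β) ≤ v * v ^ (1-β) :=
              mul_le_mul_of_nonneg_right (one_sub_exp_le v) (Real.rpow_nonneg hv0.le _)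
        _ = v ^ (2-β) := by
            rw [show (2:ℝ)-β = 1 + (1-β) by ring, Real.rpow_add hv0, Real.rpow_one]
      have habs : ‖f v‖ = (1/(β-1)) * ((1 - Real.exp (-v)) * v ^ (1-β)) := by
        rw [hf_def]
        simp only [Real.norm_eq_abs, abs_mul]
        rw [abs_of_nonneg he, abs_of_nonneg (Real.rpow_nonneg hv0.le _),
          abs_of_nonpos (by
            apply div_nonpos_of_nonneg_of_nonpos zero_le_one; linarith : (1:ℝ)/(1-β) ≤ 0)]
        have : -(1/(1-β)) = 1/(β-1) := by
          rw [neg_div', div_eq_div_iff (by linarith) (by linarith)]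
          ring
        rw [this]
      rw [habs]
      exact mul_le_mul_of_nonneg_left hle (div_nonneg zero_le_one (by linarith))
  -- integrability of f'
  have hGint : IntegrableOn (fun v : ℝ => Real.exp (-v) * v ^ ((2-β)-1)) (Ioi 0) :=
    Real.GammaIntegral_convergent (by linarith)
  have hf'int : IntegrableOn f' (Ioi 0) :=
    (integrableOn_target hβ hβ2).add (hGint.const_mul _)
  -- limit at infinity
  have hlim : Tendsto f atTop (nhds 0) := by
    have h1 : Tendsto (fun v : ℝ => (1 - Real.exp (-v))) atTop (nhds 1) := by
      have := Real.tendsto_exp_neg_atTop_nhds_zero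
      simpa using (tendsto_const_nhds (x := (1:ℝ))).sub this
    have h2 : Tendsto (fun v : ℝ => v ^ (1-β)) atTop (nhds 0) := by
      have := tendsto_rpow_neg_atTop (show (0:ℝ) < β - 1 by linarith)
      simpa [show -(β-1) = 1-β by ring] using this
    have h3 := (h1.mul h2).const_mul (1/(1-β))
    simpa only [mul_zero, one_mul] using h3
  have := integral_Ioi_of_hasDerivAt_of_tendsto hcont hderiv hf'int hlim
  rw [hf0, sub_zero] at this
  -- this : ∫ v in Ioi 0, f' v = 0
  have hsplit : ∫ v in Ioi (0:ℝ), f' v =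
      (∫ v in Ioi (0:ℝ), (1 - Real.exp (-v)) * v ^ (-β))
      + (1/(1-β)) * ∫ v in Ioi (0:ℝ), Real.exp (-v) * v ^ ((2-β)-1) := by
    rw [hf'_def, ← integral_const_mul]
    exact integral_add (integrableOn_target hβ hβ2) (hGint.const_mul _)
  rw [hsplit, ← Real.Gamma_eq_integral (by linarith : (0:ℝ) < 2-β)] at this
  have : (∫ v in Ioi (0:ℝ), (1 - Real.exp (-v)) * v ^ (-β)) =
      -(1/(1-β)) * Real.Gamma (2-β) := by linarith
  rw [this, eq_div_iff (by linarith : β - 1 ≠ 0)]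
  field_simp
  ring

lemma ceil_tendsto_atTop {v : ℝ} (hv : 0 < v) :
    Tendsto (fun z : ℝ => ⌈v/z⌉₊) (nhdsWithin 0 (Ioi 0)) atTop := by
  have h1 : Tendsto (fun z : ℝ => v / z) (nhdsWithin 0 (Ioi 0)) atTop := by
    simp_rw [div_eq_mul_inv]
    exact Tendsto.const_mul_atTop hv tendsto_inv_nhdsGT_zero
  have h2 : Tendsto (fun x : ℝ => ⌈x⌉₊) atTop atTop := by
    apply tendsto_atTop_atTop.mpr
    intro b
    exact ⟨(b:ℝ), fun x hx => by
      calc b = ⌈(b:ℝ)⌉₊ := (Nat.ceil_natCast b).symm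
      _ ≤ ⌈x⌉₊ := Nat.ceil_mono hx⟩
  exact h2.comp h1

lemma zceil_tendsto {v : ℝ} (hv : 0 < v) :
    Tendsto (fun z : ℝ => z * (⌈v/z⌉₊ : ℝ)) (nhdsWithin 0 (Ioi 0)) (nhds v) := by
  have hup : Tendsto (fun z : ℝ => v + z) (nhdsWithin 0 (Ioi 0)) (nhds v) := by
    have : Tendsto (fun z : ℝ => v + z) (nhds 0) (nhds (v + 0)) :=
      (continuous_const.add continuous_id).tendsto 0
    rw [add_zero] at this
    exact this.mono_left nhdsWithin_le_nhds
  apply tendsto_of_tendsto_of_tendsto_of_le_of_le' tendsto_const_nhds hup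
  · filter_upwards [self_mem_nhdsWithin] with z (hz : z ∈ Ioi 0)
    have hz0 : (0:ℝ) < z := hz
    have : v / z ≤ (⌈v/z⌉₊ : ℝ) := Nat.le_ceil _
    calc v = z * (v / z) := by field_simp
    _ ≤ z * (⌈v/z⌉₊ : ℝ) := mul_le_mul_of_nonneg_left this hz0.le
  · filter_upwards [self_mem_nhdsWithin] with z (hz : z ∈ Ioi 0)
    have hz0 : (0:ℝ) < z := hz
    have h1 : (⌈v/z⌉₊ : ℝ) < v / z + 1 :=
      Nat.ceil_lt_add_one (div_nonneg hv.le hz0.le)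
    calc z * (⌈v/z⌉₊ : ℝ) ≤ z * (v / z + 1) := mul_le_mul_of_nonneg_left h1.le hz0.le
    _ = v + z := by field_simp

lemma log_slope_tendsto :
    Tendsto (fun z : ℝ => Real.log (1 - z) / z) (nhdsWithin 0 (Ioi 0)) (nhds (-1)) := by
  have hderiv : HasDerivAt (fun z : ℝ => Real.log (1 - z)) (-1) 0 := by
    have h1 : HasDerivAt (fun z : ℝ => 1 - z) (-1) 0 :=
      (hasDerivAt_id 0).const_sub 1
    have h2 := (Real.hasDerivAt_log (by norm_num : (1:ℝ) - 0 ≠ 0)).comp 0 h1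
    exact h2.congr_deriv (by simp)
  have := hasDerivAt_iff_tendsto_slope.mp hderiv
  have hmono : nhdsWithin (0:ℝ) (Ioi 0) ≤ nhdsWithin 0 {x | x ≠ 0} :=
    nhdsWithin_mono 0 (fun x hx => ne_of_gt hx)
  have h3 := this.mono_left hmono
  apply h3.congr
  intro z
  simp [slope_def_field, div_eq_mul_inv, mul_comm]

lemma pow_ceil_tendsto {v : ℝ} (hv : 0 < v) :
    Tendsto (fun z : ℝ => (1 - z) ^ (⌈v/z⌉₊ : ℕ)) (nhdsWithin 0 (Ioi 0))
      (nhds (Real.exp (-v))) := by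
  have hexp : Tendsto (fun z : ℝ => Real.exp ((z * (⌈v/z⌉₊ : ℝ)) * (Real.log (1 - z) / z)))
      (nhdsWithin 0 (Ioi 0)) (nhds (Real.exp (-v))) := by
    have hmul : Tendsto (fun z : ℝ => (z * (⌈v/z⌉₊ : ℝ)) * (Real.log (1 - z) / z))
        (nhdsWithin 0 (Ioi 0)) (nhds (v * (-1))) :=
      (zceil_tendsto hv).mul log_slope_tendsto
    rw [mul_neg_one] at hmul
    exact (Real.continuous_exp.tendsto _).comp hmul
  apply hexp.congr'
  filter_upwards [self_mem_nhdsWithin, Ioo_mem_nhdsGT_of_mem (by norm_num : (0:ℝ) ∈ Ico 0 1)]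
    with z hz1 hz2
  have hz0 : (0:ℝ) < z := hz1
  have hz1' : z < 1 := hz2.2
  have h1z : (0:ℝ) < 1 - z := by linarith
  have : (z * (⌈v/z⌉₊ : ℝ)) * (Real.log (1 - z) / z) = (⌈v/z⌉₊ : ℝ) * Real.log (1 - z) := by
    field_simp
  rw [this, ← Real.log_pow, Real.exp_log (pow_pos h1z _)]

lemma pointwise_limit {β c : ℝ} (hβpos : 0 < β) (q : ℕ → ℝ)
    (htail : Tendsto (fun n : ℕ => (n:ℝ)^β * q n) atTop (nhds c))
    {v : ℝ} (hv : 0 < v) :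
    Tendsto (fun z : ℝ => (1 - (1-z)^(⌈v/z⌉₊ : ℕ)) * (q (⌈v/z⌉₊ + 1) * z ^ (-β)))
      (nhdsWithin 0 (Ioi 0)) (nhds ((1 - Real.exp (-v)) * (c * v ^ (-β)))) := by
  have hA : Tendsto (fun z : ℝ => 1 - (1 - z) ^ (⌈v/z⌉₊ : ℕ)) (nhdsWithin 0 (Ioi 0))
      (nhds (1 - Real.exp (-v))) :=
    tendsto_const_nhds.sub (pow_ceil_tendsto hv)
  have hm1 : Tendsto (fun z : ℝ => (⌈v/z⌉₊ + 1 : ℕ)) (nhdsWithin 0 (Ioi 0)) atTop :=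
    (tendsto_add_atTop_nat 1).comp (ceil_tendsto_atTop hv)
  have hfac1 : Tendsto (fun z : ℝ => ((⌈v/z⌉₊ + 1 : ℕ) : ℝ)^β * q (⌈v/z⌉₊ + 1))
      (nhdsWithin 0 (Ioi 0)) (nhds c) := htail.comp hm1
  have hzm1 : Tendsto (fun z : ℝ => z * ((⌈v/z⌉₊ + 1 : ℕ) : ℝ)) (nhdsWithin 0 (Ioi 0))
      (nhds v) := by
    have hid : Tendsto (fun z : ℝ => z) (nhdsWithin 0 (Ioi 0)) (nhds 0) :=
      tendsto_id.mono_left nhdsWithin_le_nhds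
    have := (zceil_tendsto hv).add hid
    rw [add_zero] at this
    apply this.congr
    intro z
    push_cast
    ring
  have hfac2 : Tendsto (fun z : ℝ => (z * ((⌈v/z⌉₊ + 1 : ℕ) : ℝ)) ^ (-β))
      (nhdsWithin 0 (Ioi 0)) (nhds (v ^ (-β))) :=
    ((Real.continuousAt_rpow_const v (-β) (Or.inl hv.ne')).tendsto).comp hzm1
  have hB : Tendsto (fun z : ℝ => q (⌈v/z⌉₊ + 1) * z ^ (-β)) (nhdsWithin 0 (Ioi 0))
      (nhds (c * v ^ (-β))) := by
    apply (hfac1.mul hfac2).congr'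
    filter_upwards [self_mem_nhdsWithin] with z (hz : z ∈ Ioi 0)
    have hz0 : (0:ℝ) < z := hz
    have hm0 : (0:ℝ) < ((⌈v/z⌉₊ + 1 : ℕ) : ℝ) := by positivity
    rw [Real.mul_rpow hz0.le hm0.le]
    have : ((⌈v/z⌉₊ + 1 : ℕ) : ℝ) ^ β * (((⌈v/z⌉₊ + 1 : ℕ) : ℝ)) ^ (-β) = 1 := by
      rw [← Real.rpow_add hm0]
      simp
    calc ((⌈v/z⌉₊ + 1 : ℕ) : ℝ) ^ β * q (⌈v/z⌉₊ + 1) * (z ^ (-β) * ((⌈v/z⌉₊ + 1 : ℕ) : ℝ) ^ (-β))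
        = (((⌈v/z⌉₊ + 1 : ℕ) : ℝ) ^ β * (((⌈v/z⌉₊ + 1 : ℕ) : ℝ)) ^ (-β)) *
          (q (⌈v/z⌉₊ + 1) * z ^ (-β)) := by ring
      _ = q (⌈v/z⌉₊ + 1) * z ^ (-β) := by rw [this, one_mul]
  exact hA.mul hB
theorem F_asymptotics_at_zero (β c : ℝ) (hβ : 1 < β) (hβ2 : β < 2) (hc : 0 < c)
    (p : ℕ → ℝ) (hp : ∀ n, 0 ≤ p n)
    (hsum : ∑' n, p n = 1) (hmean : ∑' n : ℕ, (n : ℝ) * p n = 1)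
    (htail : Tendsto (fun n : ℕ => (n : ℝ) ^ β * ∑' k : ℕ, p (n + k)) atTop (nhds c))
    (F : ℝ → ℝ) (hF : ∀ z, F z = z - 1 + ∑' n, p n * (1 - z) ^ n) :
    Tendsto (fun z => F z / z ^ β) (nhdsWithin 0 (Set.Ioi 0))
      (nhds (c * Real.Gamma (2 - β) / (β - 1))) := by
  have hp_summ : Summable p := summable_of_tsum_ne_zero (by rw [hsum]; norm_num)
  have hnp_summ : Summable (fun n : ℕ => (n:ℝ) * p n) :=
    summable_of_tsum_ne_zero (by rw [hmean]; norm_num)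
  set q : ℕ → ℝ := fun n => ∑' k, p (n + k) with hq_def
  have hq0 : ∀ n, 0 ≤ q n := fun n => tsum_nonneg fun k => hp _
  have htailq : Tendsto (fun n : ℕ => (n:ℝ)^β * q n) atTop (nhds c) := htail
  -- uniform bound on tails
  obtain ⟨M, hM⟩ := htailq.bddAbove_range
  have hM' : ∀ n : ℕ, (n:ℝ)^β * q n ≤ M := fun n => hM (Set.mem_range_self n)
  have hM0 : 0 ≤ M := by
    have h1 := hM' 1
    have : ((1:ℕ):ℝ)^β * q 1 = q 1 := by
      rw [Nat.cast_one, Real.one_rpow, one_mul]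
    rw [this] at h1
    exact le_trans (hq0 1) h1
  have hqle : ∀ n : ℕ, 0 < n → q n ≤ M * (n:ℝ)^(-β) := by
    intro n hn
    have hn0 : (0:ℝ) < n := by exact_mod_cast hn
    have key : (n:ℝ)^β * (n:ℝ)^(-β) = 1 := by
      rw [← Real.rpow_add hn0]; simp
    calc q n = ((n:ℝ)^β * q n) * (n:ℝ)^(-β) := by
          rw [mul_comm ((n:ℝ)^β) (q n), mul_assoc, key, mul_one]
      _ ≤ M * (n:ℝ)^(-β) :=
          mul_le_mul_of_nonneg_right (hM' n) (Real.rpow_nonneg hn0.le _)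
  -- summability of shifted tails
  have hqs : Summable (fun i : ℕ => q (i+1)) := by
    have hsum_rpow : Summable (fun i : ℕ => M * ((i:ℝ))^(-β)) :=
      (Real.summable_nat_rpow.mpr (by linarith)).mul_left M
    have hsum_shift : Summable (fun i : ℕ => M * (((i+1:ℕ)):ℝ)^(-β)) := by
      have := (_root_.summable_nat_add_iff (f := fun i : ℕ => M * ((i:ℝ))^(-β)) 1).mpr hsum_rpow
      exact this.congr (fun i => by push_cast; ring_nf)
    apply hsum_shift.of_nonneg_of_le (fun i => hq0 _)
    intro i
    exact hqle (i+1) (Nat.succ_pos i)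
  -- the key identity, valid for z ∈ Ioo 0 1
  have hkey : ∀ z ∈ Set.Ioo (0:ℝ) 1, F z = z * ∑' i : ℕ, (1-(1-z)^i) * q (i+1) := by
    intro z hz
    obtain ⟨hz0, hz1⟩ := hz
    have h1z0 : (0:ℝ) ≤ 1 - z := by linarith
    have h1z1 : (1:ℝ) - z ≤ 1 := by linarith
    have hpe : Summable (fun n : ℕ => p n * (1-z)^n) := by
      apply hp_summ.of_nonneg_of_le
        (fun n => mul_nonneg (hp n) (pow_nonneg h1z0 n))
      intro n
      calc p n * (1-z)^n ≤ p n * 1 :=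
            mul_le_mul_of_nonneg_left (pow_le_one₀ h1z0 h1z1) (hp n)
        _ = p n := mul_one _
    -- F z as a single tsum
    have hzp : Summable (fun n : ℕ => z * ((n:ℝ) * p n)) := hnp_summ.mul_left z
    have step1 : F z = ∑' n : ℕ, (z * ((n:ℝ) * p n) - p n + p n * (1-z)^n) := by
      rw [Summable.tsum_add ((hzp).sub hp_summ) hpe, Summable.tsum_sub hzp hp_summ,
        tsum_mul_left, hmean, hsum, hF z]
      ring
    -- rewrite each term using the geometric sum
    have hgeom : ∀ n : ℕ, z * ∑ i ∈ Finset.range n, (1 - (1-z)^i) =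
        (n:ℝ) * z - 1 + (1-z)^n := by
      intro n
      have hg := geom_sum_mul (1-z) n
      have hz' : ((1:ℝ)-z) - 1 = -z := by ring
      rw [hz'] at hg
      rw [Finset.sum_sub_distrib]
      simp only [Finset.sum_const, Finset.card_range, nsmul_eq_mul, mul_one]
      linear_combination hg
    have step2 : ∀ n : ℕ, z * ((n:ℝ) * p n) - p n + p n * (1-z)^n =
        z * (p n * ∑ i ∈ Finset.range n, (1 - (1-z)^i)) := by
      intro n
      have := hgeom n
      calc z * ((n:ℝ) * p n) - p n + p n * (1-z)^n
          = p n * ((n:ℝ) * z - 1 + (1-z)^n) := by ring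
        _ = p n * (z * ∑ i ∈ Finset.range n, (1 - (1-z)^i)) := by rw [← this]
        _ = z * (p n * ∑ i ∈ Finset.range n, (1 - (1-z)^i)) := by ring
    rw [step1]
    simp_rw [step2]
    rw [tsum_mul_left]
    congr 1
    exact swap_identity p hp hp_summ hnp_summ hqs z hz0 hz1
  -- summability of the series terms
  have ht_summ : ∀ z ∈ Set.Ioo (0:ℝ) 1,
      Summable (fun i : ℕ => (1-(1-z)^i) * q (i+1)) := by
    intro z hz
    obtain ⟨hz0, hz1⟩ := hz
    have h1z0 : (0:ℝ) ≤ 1 - z := by linarith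
    have h1z1 : (1:ℝ) - z ≤ 1 := by linarith
    apply hqs.of_nonneg_of_le
    · intro i
      exact mul_nonneg (by simp [sub_nonneg, pow_le_one₀ h1z0 h1z1]) (hq0 _)
    · intro i
      calc (1-(1-z)^i) * q (i+1) ≤ 1 * q (i+1) := by
            apply mul_le_mul_of_nonneg_right _ (hq0 _)
            have : (0:ℝ) ≤ (1-z)^i := pow_nonneg h1z0 i
            linarith
        _ = q (i+1) := one_mul _
  -- integral representation
  have hrep : ∀ z ∈ Set.Ioo (0:ℝ) 1, F z / z ^ β =
      ∫ v in Ioi (0:ℝ), (1-(1-z)^(⌈v/z⌉₊ : ℕ)) * (q (⌈v/z⌉₊ + 1) * z ^ (-β)) := by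
    intro z hz
    obtain ⟨hz0, hz1⟩ := hz
    have h1z0 : (0:ℝ) ≤ 1 - z := by linarith
    have h1z1 : (1:ℝ) - z ≤ 1 := by linarith
    set t : ℕ → ℝ := fun i => (1-(1-z)^i) * q (i+1) with ht_def
    have ht0 : ∀ i, 0 ≤ t i := fun i =>
      mul_nonneg (by simp [sub_nonneg, pow_le_one₀ h1z0 h1z1]) (hq0 _)
    have htsum : Summable t := ht_summ z ⟨hz0, hz1⟩
    have htsum1 : Summable (fun i => t (i+1)) :=
      (_root_.summable_nat_add_iff 1).mpr htsum
    have hstep : ∫ u in Ioi (0:ℝ), t ⌈u⌉₊ = ∑' i : ℕ, t (i+1) :=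
      step_integral t ht0 htsum1
    have hzero : ∑' i : ℕ, t i = ∑' i : ℕ, t (i+1) := by
      rw [Summable.tsum_eq_zero_add htsum]
      simp [ht_def]
    have hint : (∫ v in Ioi (0:ℝ), (1-(1-z)^(⌈v/z⌉₊ : ℕ)) * (q (⌈v/z⌉₊ + 1) * z ^ (-β)))
        = z ^ (-β) * ∫ v in Ioi (0:ℝ), t ⌈v/z⌉₊ := by
      rw [← integral_const_mul]
      congr 1
      funext v
      simp only [ht_def]
      ring
    have hb : (0:ℝ) < z⁻¹ := inv_pos.mpr hz0
    have hsub := integral_comp_mul_left_Ioi (fun u => t ⌈u⌉₊) 0 hb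
    rw [mul_zero, inv_inv, smul_eq_mul] at hsub
    simp_rw [show ∀ x : ℝ, z⁻¹ * x = x / z from fun x => (div_eq_inv_mul x z).symm] at hsub
    rw [hkey z ⟨hz0, hz1⟩, hint, hsub, hstep, ← hzero]
    rw [Real.rpow_neg hz0.le, div_eq_mul_inv]
    ring
  -- dominated convergence
  have hDCT : Tendsto (fun z => ∫ v in Ioi (0:ℝ),
        (1-(1-z)^(⌈v/z⌉₊ : ℕ)) * (q (⌈v/z⌉₊ + 1) * z ^ (-β)))
      (nhdsWithin 0 (Set.Ioi 0))
      (nhds (∫ v in Ioi (0:ℝ), (1 - Real.exp (-v)) * (c * v ^ (-β)))) := by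
    apply tendsto_integral_filter_of_dominated_convergence
      (bound := fun v => M * min (v ^ (1-β)) (v ^ (-β)))
    · -- measurability
      filter_upwards [self_mem_nhdsWithin] with z (hz : z ∈ Set.Ioi 0)
      apply Measurable.aestronglyMeasurable
      have h1 : Measurable (fun v : ℝ => (⌈v/z⌉₊ : ℕ)) :=
        ceil_measurable.comp (measurable_id.div_const z)
      exact (measurable_from_top
        (f := fun n : ℕ => (1-(1-z)^n) * (q (n+1) * z ^ (-β)))).comp h1
    · -- domination
      filter_upwards [Ioo_mem_nhdsGT_of_mem (by norm_num : (0:ℝ) ∈ Set.Ico 0 1)]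
        with z hz
      obtain ⟨hz0, hz1⟩ := hz
      apply (ae_restrict_mem measurableSet_Ioi).mono
      intro v hv
      have hv0 : (0:ℝ) < v := hv
      set m : ℕ := ⌈v/z⌉₊ with hm_def
      have h1z0 : (0:ℝ) ≤ 1 - z := by linarith
      have h1z1 : (1:ℝ) - z ≤ 1 := by linarith
      have hpow0 : (0:ℝ) ≤ (1-z)^m := pow_nonneg h1z0 m
      have hpow1 : (1-z)^m ≤ 1 := pow_le_one₀ h1z0 h1z1
      have hzb0 : (0:ℝ) ≤ z ^ (-β) := Real.rpow_nonneg hz0.le _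
      have hΦ0 : 0 ≤ (1-(1-z)^m) * (q (m + 1) * z ^ (-β)) := by
        apply mul_nonneg (by linarith) (mul_nonneg (hq0 _) hzb0)
      rw [Real.norm_of_nonneg hΦ0]
      set w : ℝ := z * ((m+1 : ℕ) : ℝ) with hw_def
      have hw0 : 0 < w := by positivity
      have hvzm : v ≤ z * (m:ℝ) := by
        have h1 : v / z ≤ (m:ℝ) := Nat.le_ceil _
        calc v = z * (v / z) := by field_simp
          _ ≤ z * (m:ℝ) := mul_le_mul_of_nonneg_left h1 hz0.le
      have hvw : v ≤ w := by
        apply le_trans hvzm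
        rw [hw_def]
        push_cast
        nlinarith
      have hqw : q (m+1) * z ^ (-β) ≤ M * w ^ (-β) := by
        have h1 : q (m+1) ≤ M * ((m+1:ℕ):ℝ) ^ (-β) := hqle (m+1) (Nat.succ_pos m)
        have h2 : w ^ (-β) = z ^ (-β) * ((m+1:ℕ):ℝ) ^ (-β) := by
          rw [hw_def, Real.mul_rpow hz0.le (by positivity)]
        calc q (m+1) * z ^ (-β) ≤ (M * ((m+1:ℕ):ℝ) ^ (-β)) * z ^ (-β) :=
              mul_le_mul_of_nonneg_right h1 hzb0
          _ = M * w ^ (-β) := by rw [h2]; ring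
      have hBern : 1 - (1-z)^m ≤ (m:ℝ) * z := by
        have := one_add_mul_le_pow (show (-2:ℝ) ≤ -z by linarith) m
        have h2 : 1 + (m:ℝ) * (-z) ≤ (1-z)^m := by
          rw [sub_eq_add_neg]; exact this
        linarith
      rw [mul_min_of_nonneg _ _ hM0]
      apply le_min
      · -- bound by M * v ^ (1-β)
        have h1 : (1-(1-z)^m) * (q (m+1) * z ^ (-β)) ≤ ((m:ℝ) * z) * (M * w ^ (-β)) :=
          mul_le_mul hBern hqw (mul_nonneg (hq0 _) hzb0) (by positivity)
        have hzmw : (m:ℝ) * z ≤ w := by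
          rw [hw_def]; push_cast; nlinarith
        have h2 : ((m:ℝ) * z) * (M * w ^ (-β)) ≤ w * (M * w ^ (-β)) :=
          mul_le_mul_of_nonneg_right hzmw (by positivity)
        have h3 : w * (M * w ^ (-β)) = M * w ^ (1-β) := by
          rw [show (1:ℝ)-β = 1 + (-β) by ring, Real.rpow_add hw0, Real.rpow_one]
          ring
        have h4 : w ^ (1-β) ≤ v ^ (1-β) :=
          Real.rpow_le_rpow_of_nonpos hv0 hvw (by linarith)
        calc (1-(1-z)^m) * (q (m+1) * z ^ (-β))
            ≤ ((m:ℝ) * z) * (M * w ^ (-β)) := h1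
          _ ≤ w * (M * w ^ (-β)) := h2
          _ = M * w ^ (1-β) := h3
          _ ≤ M * v ^ (1-β) := mul_le_mul_of_nonneg_left h4 hM0
      · -- bound by M * v ^ (-β)
        have h1 : (1-(1-z)^m) * (q (m+1) * z ^ (-β)) ≤ 1 * (M * w ^ (-β)) :=
          mul_le_mul (by linarith) hqw (mul_nonneg (hq0 _) hzb0) zero_le_one
        have h4 : w ^ (-β) ≤ v ^ (-β) :=
          Real.rpow_le_rpow_of_nonpos hv0 hvw (by linarith)
        calc (1-(1-z)^m) * (q (m+1) * z ^ (-β)) ≤ 1 * (M * w ^ (-β)) := h1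
          _ = M * w ^ (-β) := one_mul _
          _ ≤ M * v ^ (-β) := mul_le_mul_of_nonneg_left h4 hM0
    · exact (integrableOn_min_rpow hβ hβ2).const_mul M
    · -- a.e. pointwise limit
      apply (ae_restrict_mem measurableSet_Ioi).mono
      intro v hv
      exact pointwise_limit (by linarith : (0:ℝ) < β) q htailq hv
  -- compute the limit integral
  have hval : (∫ v in Ioi (0:ℝ), (1 - Real.exp (-v)) * (c * v ^ (-β)))
      = c * Real.Gamma (2-β) / (β-1) := by
    have : ∀ v : ℝ, (1 - Real.exp (-v)) * (c * v ^ (-β))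
        = c * ((1 - Real.exp (-v)) * v ^ (-β)) := fun v => by ring
    simp_rw [this]
    rw [integral_const_mul, model_integral hβ hβ2, mul_div_assoc]
  rw [hval] at hDCT
  apply hDCT.congr'
  filter_upwards [Ioo_mem_nhdsGT_of_mem (by norm_num : (0:ℝ) ∈ Set.Ico 0 1)] with z hz
  exact (hrep z hz).symm
end

section
/- Let $u : (0,\infty) \to (0,\infty)$ be measurable with $u^\beta$ locally integrable, $\beta > 1$, and suppose there exist $K_4 > 0$ and $A > 0$ such that for all $x \geq 2A$, $u(x) \leq K_4 \int_x^\infty u(y)^\beta\,dy < \infty$. Then there exists a constant $K_5 \in \mathbb{R}$ such that for all $z \geq 2A$, $\int_z^\infty u(y)^\beta\,dy \geq \big((\beta-1) K_4^\beta z + K_5\big)^{-1/(\beta-1)}$. -/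
open MeasureTheory Set

theorem tail_integral_lower_bound (u : ℝ → ℝ) (β K₄ A : ℝ)
    (hβ : 1 < β) (hK₄ : 0 < K₄) (hA : 0 < A)
    (hu_meas : Measurable u) (hu_pos : ∀ x > (0:ℝ), 0 < u x)
    (hint : ∀ x ≥ 2 * A, IntegrableOn (fun y => u y ^ β) (Ioi x))
    (hineq : ∀ x ≥ 2 * A, u x ≤ K₄ * ∫ y in Ioi x, u y ^ β) :
    ∃ K₅ : ℝ, ∀ z ≥ 2 * A,
      ((β - 1) * K₄ ^ β * z + K₅) ^ (-(1 / (β - 1))) ≤ ∫ y in Ioi z, u y ^ β := by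
  set F : ℝ → ℝ := fun z => ∫ y in Ioi z, u y ^ β with hFdef
  have hβ0 : (0:ℝ) < β := lt_trans one_pos hβ
  have hβ1 : (0:ℝ) < β - 1 := by linarith
  have h2A : (0:ℝ) < 2 * A := by positivity
  set c : ℝ := (β - 1) * K₄ ^ β with hcdef
  have hc0 : 0 < c := by positivity
  -- positivity of F
  have hFpos : ∀ z, 2 * A ≤ z → 0 < F z := by
    intro z hz
    have hz0 : 0 < z := lt_of_lt_of_le h2A hz
    have hnn : 0 ≤ᵐ[volume.restrict (Ioi z)] fun y => u y ^ β := by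
      filter_upwards [ae_restrict_mem measurableSet_Ioi] with y hy
      exact (Real.rpow_pos_of_pos (hu_pos y (lt_trans hz0 hy)) β).le
    rw [hFdef]
    rw [setIntegral_pos_iff_support_of_nonneg_ae hnn (hint z hz)]
    have hsub : Ioi z ⊆ Function.support (fun y => u y ^ β) ∩ Ioi z := by
      intro y hy
      exact ⟨(Real.rpow_pos_of_pos (hu_pos y (lt_trans hz0 hy)) β).ne', hy⟩
    calc (0:ENNReal) < volume (Ioi z) := by simp [Real.volume_Ioi]
      _ ≤ volume (Function.support (fun y => u y ^ β) ∩ Ioi z) := measure_mono hsub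
  -- splitting
  have hsplit : ∀ x, 2 * A ≤ x → ∀ y, x ≤ y →
      F x = (∫ t in Ioc x y, u t ^ β) + F y := by
    intro x hx y hxy
    have h1 : IntegrableOn (fun t => u t ^ β) (Ioc x y) := (hint x hx).mono_set Ioc_subset_Ioi_self
    have h2 : IntegrableOn (fun t => u t ^ β) (Ioi y) :=
      (hint x hx).mono_set (Ioi_subset_Ioi hxy)
    simp only [hFdef]
    rw [← Ioc_union_Ioi_eq_Ioi hxy,
      setIntegral_union Ioc_disjoint_Ioi_same measurableSet_Ioi h1 h2]
  -- antitone
  have hanti : ∀ x, 2 * A ≤ x → ∀ y, x ≤ y → F y ≤ F x := by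
    intro x hx y hxy
    rw [hsplit x hx y hxy]
    have : 0 ≤ ∫ t in Ioc x y, u t ^ β := by
      apply setIntegral_nonneg measurableSet_Ioc
      intro t ht
      exact (Real.rpow_pos_of_pos (hu_pos t (lt_trans (lt_of_lt_of_le h2A hx) ht.1)) β).le
    linarith
  -- difference bound
  have hdiff : ∀ x, 2 * A ≤ x → ∀ y, x ≤ y →
      F x - F y ≤ K₄ ^ β * F x ^ β * (y - x) := by
    intro x hx y hxy
    have h1 : IntegrableOn (fun t => u t ^ β) (Ioc x y) := (hint x hx).mono_set Ioc_subset_Ioi_self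
    have hbd : ∀ t ∈ Ioc x y, u t ^ β ≤ (K₄ * F x) ^ β := by
      intro t ht
      have ht2A : 2 * A ≤ t := le_trans hx ht.1.le
      have hut : 0 < u t := hu_pos t (lt_of_lt_of_le h2A ht2A)
      have hFt : F t ≤ F x := hanti x hx t ht.1.le
      have : u t ≤ K₄ * F x := le_trans (hineq t ht2A) (by
        have := hFpos t ht2A
        nlinarith)
      exact Real.rpow_le_rpow hut.le this hβ0.le
    have hmono : (∫ t in Ioc x y, u t ^ β) ≤ ∫ _t in Ioc x y, (K₄ * F x) ^ β := by
      apply setIntegral_mono_on h1 (integrableOn_const measure_Ioc_lt_top.ne)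
        measurableSet_Ioc hbd
    have hconst : (∫ _t in Ioc x y, (K₄ * F x) ^ β) = (K₄ * F x) ^ β * (y - x) := by
      rw [setIntegral_const, measureReal_def, Real.volume_Ioc, smul_eq_mul,
        ENNReal.toReal_ofReal (sub_nonneg.2 hxy), mul_comm]
    have heq : F x - F y = ∫ t in Ioc x y, u t ^ β := by
      rw [hsplit x hx y hxy]; ring
    rw [heq]
    calc (∫ t in Ioc x y, u t ^ β) ≤ (K₄ * F x) ^ β * (y - x) :=
          le_trans hmono (le_of_eq hconst)
      _ = K₄ ^ β * F x ^ β * (y - x) := by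
          rw [Real.mul_rpow hK₄.le (hFpos x hx).le]
  -- continuity of F on Icc a b for 2A ≤ a
  have hFcont : ∀ a, 2 * A ≤ a → ∀ b, ContinuousOn F (Icc a b) := by
    intro a ha b
    have hIcc : IntegrableOn (fun t => u t ^ β) (Icc a b) :=
      (integrableOn_Icc_iff_integrableOn_Ioc (by finiteness)).2 ((hint a ha).mono_set Ioc_subset_Ioi_self)
    have hcont := intervalIntegral.continuousOn_primitive (f := fun t => u t ^ β) (μ := volume)
      (a := a) (b := b) hIcc
    have : ∀ z ∈ Icc a b, F a - (∫ t in Ioc a z, u t ^ β) = F z := by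
      intro z hz
      rw [hsplit a ha z hz.1]; ring
    exact (continuousOn_const.sub hcont).congr (fun z hz => (this z hz).symm)
  -- MVT lemma
  have key : ∀ s t : ℝ, 0 < s → s ≤ t →
      s ^ (1 - β) - t ^ (1 - β) ≤ (β - 1) * s ^ (-β) * (t - s) := by
    intro s t hs hst
    rcases eq_or_lt_of_le hst with rfl | hlt
    · simp
    · have hcont : ContinuousOn (fun r : ℝ => r ^ (1 - β)) (Icc s t) := by
        apply ContinuousOn.rpow_const continuousOn_id
        intro r hr
        exact Or.inl (ne_of_gt (lt_of_lt_of_le hs hr.1))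
      have hderiv : ∀ r ∈ Ioo s t,
          HasDerivAt (fun r : ℝ => r ^ (1 - β)) ((1 - β) * r ^ (-β)) r := by
        intro r hr
        have := Real.hasDerivAt_rpow_const (x := r) (p := 1 - β)
          (Or.inl (ne_of_gt (lt_trans hs hr.1)))
        convert this using 2
        ring_nf
      obtain ⟨r, hr, hr2⟩ := exists_hasDerivAt_eq_slope (fun r : ℝ => r ^ (1 - β))
        (fun r => (1 - β) * r ^ (-β)) hlt hcont hderiv
      have hts : 0 < t - s := by linarith
      have hrs : s ^ (1 - β) - t ^ (1 - β) = (β - 1) * r ^ (-β) * (t - s) := by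
        have := hr2
        field_simp at this
        nlinarith [this]
      rw [hrs]
      have hrpow : r ^ (-β) ≤ s ^ (-β) :=
        Real.rpow_le_rpow_of_nonpos hs hr.1.le (by linarith)
      exact mul_le_mul_of_nonneg_right (mul_le_mul_of_nonneg_left hrpow hβ1.le) hts.le
  -- main Gronwall argument
  refine ⟨F (2 * A) ^ (1 - β) - c * (2 * A), ?_⟩
  intro z hz
  set G : ℝ → ℝ := fun x => F x ^ (1 - β) with hGdef
  have hGcont : ContinuousOn G (Icc (2 * A) z) := by
    apply ContinuousOn.rpow_const (hFcont (2 * A) le_rfl z)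
    intro x hx
    exact Or.inl (ne_of_gt (hFpos x hx.1))
  have hgron := le_gronwallBound_of_liminf_deriv_right_le (f := G) (f' := fun _ => c)
    (δ := G (2 * A)) (K := 0) (ε := c) (a := 2 * A) (b := z) hGcont ?_ le_rfl
    (fun x _ => by simp) z ⟨hz, le_rfl⟩
  · rw [gronwallBound_K0] at hgron
    have hgron' : G z ≤ G (2 * A) + c * (z - 2 * A) := hgron
    have hG2A : G (2 * A) = F (2 * A) ^ (1 - β) := rfl
    have hGz : G z ≤ c * z + (F (2 * A) ^ (1 - β) - c * (2 * A)) := by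
      linarith
    have hGzpos : 0 < G z := Real.rpow_pos_of_pos (hFpos z hz) _
    have hmain : (c * z + (F (2 * A) ^ (1 - β) - c * (2 * A))) ^ (-(1 / (β - 1)))
        ≤ G z ^ (-(1 / (β - 1))) :=
      Real.rpow_le_rpow_of_nonpos hGzpos hGz
        (neg_nonpos.2 (by positivity))
    have hGz1 : G z ^ (-(1 / (β - 1))) = F z := by
      have hne : β - 1 ≠ 0 := hβ1.ne'
      have h1 : (1 - β) * -(1 / (β - 1)) = 1 := by field_simp; ring
      show (F z ^ (1 - β)) ^ (-(1 / (β - 1))) = F z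
      rw [← Real.rpow_mul (hFpos z hz).le, h1, Real.rpow_one]
    calc (c * z + (F (2 * A) ^ (1 - β) - c * (2 * A))) ^ (-(1 / (β - 1)))
        ≤ G z ^ (-(1 / (β - 1))) := hmain
      _ = F z := hGz1
  · -- liminf slope condition
    intro x hx r hr
    apply Filter.Eventually.frequently
    have hx2A : 2 * A ≤ x := hx.1
    have hFx : 0 < F x := hFpos x hx2A
    -- tendsto of F along 𝓝[>] x
    have htend : Filter.Tendsto F (nhdsWithin x (Ioi x)) (nhds (F x)) := by
      rw [← nhdsWithin_Ioc_eq_nhdsGT (lt_add_one x)]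
      have := (hFcont x hx2A (x + 1)).continuousWithinAt
        (x := x) ⟨le_rfl, by linarith⟩
      exact this.mono Ioc_subset_Icc_self
    have hψ : Filter.Tendsto (fun w => c * (F x ^ β * F w ^ (-β)))
        (nhdsWithin x (Ioi x)) (nhds c) := by
      have h1 : Filter.Tendsto (fun w => F w ^ (-β)) (nhdsWithin x (Ioi x))
          (nhds (F x ^ (-β))) := htend.rpow_const (Or.inl hFx.ne')
      have h2 := (h1.const_mul (F x ^ β)).const_mul c
      have : c * (F x ^ β * F x ^ (-β)) = c := by
        rw [← Real.rpow_add hFx]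
        simp
      rwa [this] at h2
    have hev : ∀ᶠ w in nhdsWithin x (Ioi x), c * (F x ^ β * F w ^ (-β)) < r :=
      hψ.eventually_lt_const hr
    filter_upwards [hev, self_mem_nhdsWithin] with w hw hwx
    have hwx' : x < w := hwx
    have hw2A : 2 * A ≤ w := le_trans hx2A hwx'.le
    have hFw : 0 < F w := hFpos w hw2A
    have hFwx : F w ≤ F x := hanti x hx2A w hwx'.le
    have hk := key (F w) (F x) hFw hFwx
    have hd := hdiff x hx2A w hwx'.le
    have hslope : G w - G x ≤ c * (F x ^ β * F w ^ (-β)) * (w - x) := by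
      have h1 : G w - G x ≤ (β - 1) * F w ^ (-β) * (F x - F w) := hk
      have h2 : (β - 1) * F w ^ (-β) * (F x - F w)
          ≤ (β - 1) * F w ^ (-β) * (K₄ ^ β * F x ^ β * (w - x)) := by
        apply mul_le_mul_of_nonneg_left hd
        positivity
      calc G w - G x ≤ (β - 1) * F w ^ (-β) * (K₄ ^ β * F x ^ β * (w - x)) :=
            le_trans h1 h2
        _ = c * (F x ^ β * F w ^ (-β)) * (w - x) := by rw [hcdef]; ring
    have hwx0 : 0 < w - x := by linarith
    calc (w - x)⁻¹ * (G w - G x) ≤ (w - x)⁻¹ * (c * (F x ^ β * F w ^ (-β)) * (w - x)) := by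
          apply mul_le_mul_of_nonneg_left hslope (inv_nonneg.2 hwx0.le)
      _ = c * (F x ^ β * F w ^ (-β)) := by field_simp
      _ < r := hw
end

section
/- Let $v : (0,\infty) \to (0,\infty)$ be defined by $v(x) = \int_x^\infty u(y)^\beta\,dy$ where $u$ is positive and nonincreasing, $\beta > 1$, and suppose $v(x) > 0$ for all $x$ and $u(x) \geq c\, v(x)$ for all $x \geq A$ with $c > 0$. Then for all $z > A$: $v(z)^{1-\beta} \geq v(A)^{1-\beta} + (\beta - 1) c^\beta (z - A)$, and consequently $\limsup_{z\to\infty} z^{1/(\beta-1)} v(z) \leq \big((\beta-1) c^\beta\big)^{-1/(\beta-1)}$. -/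
open MeasureTheory Set Filter

theorem v_power_lower_bound_and_limsup (u v : ℝ → ℝ) (β c A : ℝ)
    (hβ : 1 < β) (hc : 0 < c) (hA : 0 < A)
    (hu_pos : ∀ x > (0:ℝ), 0 < u x) (hu_anti : AntitoneOn u (Ioi 0))
    (hv : ∀ x > (0:ℝ), v x = ∫ y in Ioi x, u y ^ β)
    (hv_pos : ∀ x > (0:ℝ), 0 < v x)
    (huv : ∀ x ≥ A, c * v x ≤ u x) :
    (∀ z > A, v A ^ (1 - β) + (β - 1) * c ^ β * (z - A) ≤ v z ^ (1 - β)) ∧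
      limsup (fun z => z ^ (1 / (β - 1)) * v z) atTop ≤
        ((β - 1) * c ^ β) ^ (-(1 / (β - 1))) := by
  have hβ1 : (0:ℝ) < β - 1 := by linarith
  set K : ℝ := (β - 1) * c ^ β with hK_def
  have hK : 0 < K := mul_pos hβ1 (Real.rpow_pos_of_pos hc β)
  -- integrability
  have hint : ∀ x > (0:ℝ), IntegrableOn (fun t => u t ^ β) (Ioi x) := by
    intro x hx
    by_contra h
    have h0 : (∫ y in Ioi x, u y ^ β) = 0 := integral_undef h
    have := hv_pos x hx
    rw [hv x hx, h0] at this
    exact lt_irrefl 0 this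
  -- splitting
  have hsplit : ∀ x y : ℝ, 0 < x → x ≤ y →
      v x = (∫ t in Ioc x y, u t ^ β) + v y := by
    intro x y hx hxy
    have hy : 0 < y := lt_of_lt_of_le hx hxy
    have hun : Ioc x y ∪ Ioi y = Ioi x := Ioc_union_Ioi_eq_Ioi hxy
    have hdisj : Disjoint (Ioc x y) (Ioi y) := by
      apply disjoint_left.2
      intro t ht ht'
      exact absurd ht.2 (not_le.2 ht')
    have h1 : IntegrableOn (fun t => u t ^ β) (Ioc x y) :=
      (hint x hx).mono_set (fun t ht => ht.1)
    have h2 : IntegrableOn (fun t => u t ^ β) (Ioi y) := hint y hy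
    rw [hv x hx, hv y hy, ← hun, setIntegral_union hdisj measurableSet_Ioi h1 h2]
  -- continuity of v on positive reals
  have hv_cont : ∀ x > (0:ℝ), ContinuousAt v x := by
    intro x0 hx0
    set a := x0 / 2 with ha_def
    have ha : 0 < a := by positivity
    have hax : a < x0 := by linarith
    have hIcc : IntegrableOn (fun t => u t ^ β) (Icc a (x0 + 1)) :=
      (hint (a / 2) (by positivity)).mono_set
        (fun t ht => lt_of_lt_of_le (by linarith) ht.1)
    have hprim : ContinuousOn (fun x => ∫ t in Ioc a x, u t ^ β) (Icc a (x0 + 1)) :=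
      intervalIntegral.continuousOn_primitive hIcc
    have hmem : Icc a (x0 + 1) ∈ nhds x0 := Icc_mem_nhds hax (by linarith)
    have hca : ContinuousAt (fun x => v a - ∫ t in Ioc a x, u t ^ β) x0 :=
      (continuousAt_const.sub (hprim.continuousAt hmem))
    apply hca.congr
    filter_upwards [hmem] with x hx
    have : v a = (∫ t in Ioc a x, u t ^ β) + v x := hsplit a x ha hx.1
    linarith
  -- key slope inequality
  have key : ∀ x y : ℝ, A ≤ x → x < y →
      K * (v y / v x) ^ β * (y - x) ≤ v y ^ (1 - β) - v x ^ (1 - β) := by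
    intro x y hAx hxy
    have hx : 0 < x := lt_of_lt_of_le hA hAx
    have hy : 0 < y := hx.trans hxy
    have hvx : 0 < v x := hv_pos x hx
    have hvy : 0 < v y := hv_pos y hy
    have hcv : 0 < c * v y := mul_pos hc hvy
    -- integral lower bound
    have hIoc : IntegrableOn (fun t => u t ^ β) (Ioc x y) :=
      (hint x hx).mono_set (fun t ht => ht.1)
    have hlow : (c * v y) ^ β * (y - x) ≤ ∫ t in Ioc x y, u t ^ β := by
      have := setIntegral_ge_of_const_le (c := (c * v y) ^ β)
        measurableSet_Ioc (by simp [Real.volume_Ioc])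
        (fun t ht => by
          have htpos : 0 < t := hx.trans ht.1
          have h1 : u y ≤ u t := hu_anti (mem_Ioi.2 htpos) (mem_Ioi.2 hy) ht.2
          have h2 : c * v y ≤ u t := le_trans (huv y (le_trans hAx hxy.le)) h1
          exact Real.rpow_le_rpow hcv.le h2 (by linarith))
        hIoc
      calc (c * v y) ^ β * (y - x)
          = (c * v y) ^ β * (volume (Ioc x y)).toReal := by
            rw [Real.volume_Ioc, ENNReal.toReal_ofReal (by linarith)]
        _ ≤ _ := by rw [measureReal_def, smul_eq_mul] at this; linarith
    have hsum := hsplit x y hx hxy.le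
    have hiv : (c * v y) ^ β * (y - x) ≤ v x - v y := by
      rw [hsum]; simpa using hlow
    have hvlt : v y < v x := by
      have : 0 < (c * v y) ^ β * (y - x) :=
        mul_pos (Real.rpow_pos_of_pos hcv β) (by linarith)
      linarith
    -- MVT for t ↦ t ^ (1 - β) on [v y, v x]
    obtain ⟨ξ, hξ, hξeq⟩ := exists_hasDerivAt_eq_slope (fun t => t ^ (1 - β))
      (fun t => (1 - β) * t ^ (-β)) hvlt
      (fun t ht => (Real.continuousAt_rpow_const t (1 - β)
        (Or.inl (ne_of_gt (lt_of_lt_of_le hvy ht.1)))).continuousWithinAt)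
      (fun t ht => by
        have htpos : 0 < t := hvy.trans ht.1
        have := Real.hasDerivAt_rpow_const (x := t) (p := 1 - β) (Or.inl htpos.ne')
        simpa [show (1:ℝ) - β - 1 = -β by ring] using this)
    have hξpos : 0 < ξ := hvy.trans hξ.1
    have hdiff : v x ^ (1 - β) - v y ^ (1 - β) = (1 - β) * ξ ^ (-β) * (v x - v y) := by
      have hne : v x - v y ≠ 0 := by linarith
      field_simp at hξeq
      linarith [hξeq]
    have hξle : ξ ^ (-β) ≥ v x ^ (-β) :=
      Real.rpow_le_rpow_of_nonpos hξpos hξ.2.le (by linarith)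
    have hstep : (β - 1) * v x ^ (-β) * (v x - v y) ≤ v y ^ (1 - β) - v x ^ (1 - β) := by
      rw [show v y ^ (1 - β) - v x ^ (1 - β) = (β - 1) * ξ ^ (-β) * (v x - v y) by
        rw [← neg_sub (v x ^ (1-β)), hdiff]; ring]
      apply mul_le_mul_of_nonneg_right _ (by linarith)
      exact mul_le_mul_of_nonneg_left hξle (by linarith)
    calc K * (v y / v x) ^ β * (y - x)
        = (β - 1) * v x ^ (-β) * ((c * v y) ^ β * (y - x)) := by
          rw [Real.div_rpow hvy.le hvx.le, Real.mul_rpow hc.le hvy.le,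
            Real.rpow_neg hvx.le]
          field_simp [hK_def]
          ring
      _ ≤ (β - 1) * v x ^ (-β) * (v x - v y) := by
          apply mul_le_mul_of_nonneg_left hiv
          positivity
      _ ≤ _ := hstep
  -- Part 1
  have part1 : ∀ z > A, v A ^ (1 - β) + (β - 1) * c ^ β * (z - A) ≤ v z ^ (1 - β) := by
    intro z hz
    have main := image_le_of_liminf_slope_right_le_deriv_boundary
      (f := fun x => -(v x ^ (1 - β))) (a := A) (b := z)
      (B := fun x => -(v A ^ (1 - β)) + (-K) * (x - A)) (B' := fun _ => -K)
      ?_ (by simp) ?_ ?_ ?_ (right_mem_Icc.2 hz.le)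
    · have := main
      nlinarith [this]
    · -- continuity of f on Icc A z
      intro x hx
      have hxpos : 0 < x := lt_of_lt_of_le hA hx.1
      have : ContinuousAt (fun x => -(v x ^ (1 - β))) x := by
        have h1 : ContinuousAt (fun t : ℝ => t ^ (1 - β)) (v x) :=
          Real.continuousAt_rpow_const _ _ (Or.inl (hv_pos x hxpos).ne')
        exact (h1.comp (hv_cont x hxpos)).neg
      exact this.continuousWithinAt
    · exact (continuousOn_const.add (continuousOn_const.mul
        (continuousOn_id.sub continuousOn_const)))
    · intro x _
      have : HasDerivWithinAt (fun x => -(v A ^ (1 - β)) + (-K) * (x - A)) ((-K) * 1) (Ici x) x := by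
        exact (((hasDerivWithinAt_id x (Ici x)).sub_const A).const_mul (-K)).const_add _
      simpa using this
    · -- slope bound
      intro x hx r hr
      have hxA : A ≤ x := hx.1
      have hxpos : 0 < x := lt_of_lt_of_le hA hxA
      have hvx : 0 < v x := hv_pos x hxpos
      have htend : Tendsto (fun y => -K * (v y / v x) ^ β) (nhdsWithin x (Ioi x)) (nhds (-K)) := by
        have h1 : ContinuousAt (fun y => -K * (v y / v x) ^ β) x :=
          continuousAt_const.mul (((hv_cont x hxpos).div_const _).rpow_const
            (Or.inl (by rw [div_self hvx.ne']; norm_num)))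
        have h2 : (fun y => -K * (v y / v x) ^ β) x = -K := by
          simp [div_self hvx.ne', Real.one_rpow]
        have := (h1.continuousWithinAt (s := Ioi x)).tendsto
        simpa [div_self hvx.ne', Real.one_rpow] using this
      have hev : ∀ᶠ y in nhdsWithin x (Ioi x), -K * (v y / v x) ^ β < r :=
        htend.eventually (Filter.Tendsto.eventually_lt_const hr tendsto_id |>.mono (fun _ h => h))
      apply Frequently.mono _ (fun y h => h)
      apply Eventually.frequently
      filter_upwards [hev, self_mem_nhdsWithin] with y hy (hxy : y ∈ Ioi x)
      have hxy' : x < y := hxy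
      have hk := key x y hxA hxy'
      have hslope : slope (fun x => -(v x ^ (1 - β))) x y ≤ -K * (v y / v x) ^ β := by
        rw [slope_def_field]
        rw [div_le_iff₀ (by linarith)]
        nlinarith [hk]
      exact lt_of_le_of_lt hslope hy
  refine ⟨part1, ?_⟩
  -- Part 2
  set p : ℝ := 1 / (β - 1) with hp_def
  have hp : 0 < p := by positivity
  set D : ℝ := v A ^ (1 - β) with hD_def
  have hD : 0 < D := Real.rpow_pos_of_pos (hv_pos A hA) _
  set E : ℝ := D - K * A with hE_def
  have hq : (-(1 / (β - 1))) = -p := by rw [hp_def]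
  -- pointwise eventual bound
  have hKA : K * A ≤ K * A := le_rfl
  have hupper : ∀ z > A, v z ≤ (K * z + E) ^ (-p) := by
    intro z hz
    have hzpos : 0 < z := hA.trans hz
    have hvz : 0 < v z := hv_pos z hzpos
    have h1 : D + K * (z - A) ≤ v z ^ (1 - β) := part1 z hz
    have hX : 0 < K * z + E := by
      have : K * z + E = D + K * (z - A) := by rw [hE_def]; ring
      rw [this]
      have : 0 < K * (z - A) := mul_pos hK (by linarith)
      linarith
    have hXeq : K * z + E = D + K * (z - A) := by rw [hE_def]; ring
    have h2 : (v z ^ (1 - β)) ^ (-p) ≤ (K * z + E) ^ (-p) := by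
      rw [hXeq]
      exact Real.rpow_le_rpow_of_nonpos (by rw [← hXeq]; exact hX) h1 (by linarith)
    have h3 : (v z ^ (1 - β)) ^ (-p) = v z := by
      rw [← Real.rpow_mul hvz.le]
      have : (1 - β) * (-p) = 1 := by
        rw [hp_def]; field_simp; ring
      rw [this, Real.rpow_one]
    rwa [h3] at h2
  -- the comparison function
  have hgh : ∀ᶠ z in atTop, z ^ p * v z ≤ (z / (K * z + E)) ^ p := by
    filter_upwards [eventually_gt_atTop A] with z hz
    have hzpos : 0 < z := hA.trans hz
    have hX : 0 < K * z + E := by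
      have hXeq : K * z + E = D + K * (z - A) := by rw [hE_def]; ring
      rw [hXeq]
      have : 0 < K * (z - A) := mul_pos hK (by linarith)
      linarith
    have h1 : z ^ p * v z ≤ z ^ p * (K * z + E) ^ (-p) :=
      mul_le_mul_of_nonneg_left (hupper z hz) (Real.rpow_nonneg hzpos.le p)
    have h2 : z ^ p * (K * z + E) ^ (-p) = (z / (K * z + E)) ^ p := by
      rw [Real.div_rpow hzpos.le hX.le, Real.rpow_neg hX.le, div_eq_mul_inv]
    rw [h2] at h1
    exact h1
  -- the comparison function tends to K ^ (-p)
  have ht1 : Tendsto (fun z : ℝ => z / (K * z + E)) atTop (nhds (1 / K)) := by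
    have h1 : Tendsto (fun z : ℝ => K + E / z) atTop (nhds (K + 0)) :=
      tendsto_const_nhds.add (tendsto_const_nhds.div_atTop tendsto_id)
    rw [add_zero] at h1
    have h2 : Tendsto (fun z : ℝ => 1 / (K + E / z)) atTop (nhds (1 / K)) := by
      exact Tendsto.div tendsto_const_nhds h1 hK.ne'
    apply h2.congr'
    filter_upwards [eventually_gt_atTop (max 0 ((|E| + 1) / K))] with z hz
    have hz0 : 0 < z := lt_of_le_of_lt (le_max_left _ _) hz
    have hzE : (|E| + 1) / K < z := lt_of_le_of_lt (le_max_right _ _) hz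
    have hX : 0 < K * z + E := by
      have h3 : |E| + 1 < K * z := by
        rw [div_lt_iff₀ hK] at hzE; linarith [mul_comm z K]
      have h4 := neg_abs_le E
      linarith
    field_simp
  have ht2 : Tendsto (fun z : ℝ => (z / (K * z + E)) ^ p) atTop (nhds ((1 / K) ^ p)) := by
    have hcont : ContinuousAt (fun t : ℝ => t ^ p) (1 / K) :=
      Real.continuousAt_rpow_const _ _ (Or.inl (by positivity))
    exact hcont.tendsto.comp ht1
  have hval : ((1 : ℝ) / K) ^ p = K ^ (-p) := by
    rw [one_div, Real.rpow_neg hK.le, Real.inv_rpow hK.le]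
  -- conclude
  have hcb : IsCoboundedUnder (· ≤ ·) atTop (fun z => z ^ p * v z) := by
    apply Filter.IsBoundedUnder.isCoboundedUnder_le (α := ℝ)
    refine ⟨0, ?_⟩
    simp only [eventually_map]
    filter_upwards [eventually_gt_atTop (0 : ℝ)] with z hz
    have : 0 ≤ z ^ p * v z :=
      mul_nonneg (Real.rpow_nonneg hz.le p) (hv_pos z hz).le
    exact this
  have hbdd : IsBoundedUnder (· ≤ ·) atTop (fun z : ℝ => (z / (K * z + E)) ^ p) :=
    ht2.isBoundedUnder_le
  calc limsup (fun z => z ^ (1 / (β - 1)) * v z) atTop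
      ≤ limsup (fun z : ℝ => (z / (K * z + E)) ^ p) atTop := by
        apply limsup_le_limsup _ hcb hbdd
        rw [Filter.EventuallyLE]
        simpa [hp_def] using hgh
    _ = (1 / K) ^ p := ht2.limsup_eq
    _ = ((β - 1) * c ^ β) ^ (-(1 / (β - 1))) := by rw [hval, hq, hK_def]
end

section
/- Let $L$ and $S$ be real random variables with $S \geq \max(L, 0)$ a.s., let $f : \mathbb{R} \to [0,\infty)$ be nonincreasing, vanishing on $(-\infty,0)$, bounded by $f(0)$, and let $\lambda > 0$. Then, writing $x f$ for the map $x \mapsto x f(x)$, one has $\int_0^\infty e^{-\lambda x}\, x\, \mathbb{E}[1_{\{S < x\}} f(x-L)]\,dx \leq \mathbb{E}[e^{-\lambda S}]\,\mathcal{L}[xf](\lambda) + \mathbb{E}[S e^{-\lambda S}]\,\mathcal{L}[f](\lambda)$, provided $\mathbb{E}[S] < \infty$. -/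
open MeasureTheory ProbabilityTheory Set Real

theorem key_lemma_upper_bound_xf {Ω : Type*} [MeasureSpace Ω]
    [IsProbabilityMeasure (ℙ : Measure Ω)]
    (L S : Ω → ℝ) (hL : Measurable L) (hS : Measurable S)
    (hS_ge : ∀ᵐ ω, max (L ω) 0 ≤ S ω)
    (hS_int : Integrable S)
    (f : ℝ → ℝ) (hf_nonneg : ∀ x, 0 ≤ f x) (hf_anti : Antitone f)
    (hf_zero : ∀ x < (0:ℝ), f x = 0) (hf_bdd : ∀ x, f x ≤ f 0)
    (lam : ℝ) (hlam : 0 < lam) :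
    (∫ x in Ioi (0:ℝ), Real.exp (-lam * x) * x *
        ∫ ω, (if S ω < x then f (x - L ω) else 0)) ≤
      (∫ ω, Real.exp (-lam * S ω)) * (∫ x in Ioi (0:ℝ), Real.exp (-lam * x) * (x * f x))
        + (∫ ω, S ω * Real.exp (-lam * S ω)) *
            ∫ x in Ioi (0:ℝ), Real.exp (-lam * x) * f x := by
  have hfm : Measurable f := hf_anti.measurable
  have hf0 : 0 ≤ f 0 := hf_nonneg 0
  have hS0 : ∀ᵐ ω, 0 ≤ S ω := by
    filter_upwards [hS_ge] with ω h; exact le_trans (le_max_right _ _) h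
  have hLS : ∀ᵐ ω, L ω ≤ S ω := by
    filter_upwards [hS_ge] with ω h; exact le_trans (le_max_left _ _) h
  set μ : Measure ℝ := volume.restrict (Ioi (0:ℝ)) with hμ
  -- basic integrabilities on Ioi 0
  have hxexp : IntegrableOn (fun x => Real.exp (-lam * x) * x) (Ioi 0) := by
    apply Integrable.mono' ((exp_neg_integrableOn_Ioi 0 (half_pos hlam)).const_mul (2 / lam))
    · exact ((measurable_exp.comp (measurable_const.mul measurable_id)).mul
        measurable_id).aestronglyMeasurable
    · filter_upwards [ae_restrict_mem measurableSet_Ioi] with x hx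
      have hx0 : (0:ℝ) < x := hx
      have h1 : lam / 2 * x ≤ Real.exp (lam / 2 * x) := by
        nlinarith [Real.add_one_le_exp (lam / 2 * x)]
      have h2 : x ≤ 2 / lam * Real.exp (lam / 2 * x) := by
        calc x = 2 / lam * (lam / 2 * x) := by field_simp
          _ ≤ 2 / lam * Real.exp (lam / 2 * x) :=
              mul_le_mul_of_nonneg_left h1 (by positivity)
      have hnn : 0 ≤ Real.exp (-lam * x) * x := by positivity
      rw [Real.norm_eq_abs, abs_of_nonneg hnn]
      calc Real.exp (-lam * x) * x ≤ Real.exp (-lam * x) * (2 / lam * Real.exp (lam / 2 * x)) := by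
            exact mul_le_mul_of_nonneg_left h2 (le_of_lt (Real.exp_pos _))
        _ = 2 / lam * Real.exp (-(lam / 2) * x) := by
            rw [← mul_assoc, mul_comm (Real.exp (-lam*x)) (2/lam), mul_assoc, ← Real.exp_add]
            ring_nf
  have hB : IntegrableOn (fun x => Real.exp (-lam * x) * f x) (Ioi 0) := by
    apply Integrable.mono' ((exp_neg_integrableOn_Ioi 0 hlam).const_mul (f 0))
    · exact ((measurable_exp.comp (measurable_const.mul measurable_id)).mul
        hfm).aestronglyMeasurable
    · refine Filter.Eventually.of_forall fun x => ?_
      have hnn : 0 ≤ Real.exp (-lam * x) * f x :=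
        mul_nonneg (Real.exp_pos _).le (hf_nonneg x)
      rw [Real.norm_eq_abs, abs_of_nonneg hnn]
      calc Real.exp (-lam * x) * f x ≤ Real.exp (-lam * x) * f 0 :=
            mul_le_mul_of_nonneg_left (hf_bdd x) (le_of_lt (Real.exp_pos _))
        _ = f 0 * Real.exp (-lam * x) := by ring
  have hA : IntegrableOn (fun x => Real.exp (-lam * x) * (x * f x)) (Ioi 0) := by
    apply Integrable.mono' (hxexp.const_mul (f 0))
    · exact ((measurable_exp.comp (measurable_const.mul measurable_id)).mul
        (measurable_id.mul hfm)).aestronglyMeasurable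
    · filter_upwards [ae_restrict_mem measurableSet_Ioi] with x hx
      have hx0 : (0:ℝ) < x := hx
      have hnn : 0 ≤ Real.exp (-lam * x) * (x * f x) :=
        mul_nonneg (Real.exp_pos _).le (mul_nonneg hx0.le (hf_nonneg x))
      rw [Real.norm_eq_abs, abs_of_nonneg hnn]
      calc Real.exp (-lam * x) * (x * f x) = (Real.exp (-lam * x) * x) * f x := by ring
        _ ≤ (Real.exp (-lam * x) * x) * f 0 := by
            apply mul_le_mul_of_nonneg_left (hf_bdd x); positivity
        _ = f 0 * (Real.exp (-lam * x) * x) := by ring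
  set A : ℝ := ∫ x in Ioi (0:ℝ), Real.exp (-lam * x) * (x * f x) with hA_def
  set B : ℝ := ∫ x in Ioi (0:ℝ), Real.exp (-lam * x) * f x with hB_def
  -- probability-side integrabilities
  have hexpS : Integrable (fun ω => Real.exp (-lam * S ω)) := by
    apply Integrable.mono' (integrable_const (1:ℝ))
    · exact (measurable_exp.comp (measurable_const.mul hS)).aestronglyMeasurable
    · filter_upwards [hS0] with ω h
      rw [Real.norm_eq_abs, abs_of_nonneg (le_of_lt (Real.exp_pos _))]
      apply Real.exp_le_one_iff.mpr; nlinarith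
  have hSexpS : Integrable (fun ω => S ω * Real.exp (-lam * S ω)) := by
    apply Integrable.mono' hS_int
    · exact (hS.mul (measurable_exp.comp (measurable_const.mul hS))).aestronglyMeasurable
    · filter_upwards [hS0] with ω h
      have he1 : Real.exp (-lam * S ω) ≤ 1 := by
        apply Real.exp_le_one_iff.mpr; nlinarith
      rw [Real.norm_eq_abs, abs_of_nonneg (by positivity)]
      nlinarith [Real.exp_pos (-lam * S ω)]
  -- the product function
  set F : ℝ → Ω → ℝ := fun x ω =>
      Real.exp (-lam * x) * x * (if S ω < x then f (x - S ω) else 0) with hF_def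
  have hFmeas : Measurable (Function.uncurry F) := by
    apply ((measurable_exp.comp (measurable_const.mul measurable_fst)).mul measurable_fst).mul
    exact Measurable.ite (measurableSet_lt (hS.comp measurable_snd) measurable_fst)
      (hfm.comp (measurable_fst.sub (hS.comp measurable_snd))) measurable_const
  have hfst : ∀ᵐ p ∂(μ.prod (ℙ : Measure Ω)), p.1 ∈ Ioi (0:ℝ) := by
    have hmap : (μ.prod (ℙ : Measure Ω)).map Prod.fst = μ := by
      rw [Measure.map_fst_prod]; simp
    have h1 : ∀ᵐ x ∂((μ.prod (ℙ : Measure Ω)).map Prod.fst), x ∈ Ioi (0:ℝ) := by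
      rw [hmap]; exact ae_restrict_mem measurableSet_Ioi
    exact (ae_map_iff measurable_fst.aemeasurable measurableSet_Ioi).mp h1
  have hF : Integrable (Function.uncurry F) (μ.prod (ℙ : Measure Ω)) := by
    apply Integrable.mono'
      (Integrable.mul_prod (μ := μ) (ν := (ℙ : Measure Ω))
        (hxexp.mul_const (f 0)) (integrable_const (1:ℝ)))
    · exact hFmeas.aestronglyMeasurable
    · filter_upwards [hfst] with p hp
      have hx0 : (0:ℝ) < p.1 := hp
      have h1 : 0 ≤ Function.uncurry F p := by
        simp only [Function.uncurry, hF_def]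
        split_ifs with h
        · exact mul_nonneg (mul_nonneg (Real.exp_pos _).le hx0.le) (hf_nonneg _)
        · simp
      have h2 : Function.uncurry F p ≤ Real.exp (-lam * p.1) * p.1 * f 0 := by
        simp only [Function.uncurry, hF_def]
        split_ifs with h
        · exact mul_le_mul_of_nonneg_left (hf_bdd _)
            (mul_nonneg (Real.exp_pos _).le hx0.le)
        · rw [mul_zero]
          exact mul_nonneg (mul_nonneg (Real.exp_pos _).le hx0.le) hf0
      rw [Real.norm_eq_abs, abs_of_nonneg h1]
      calc Function.uncurry F p ≤ Real.exp (-lam * p.1) * p.1 * f 0 := h2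
        _ = Real.exp (-lam * p.1) * p.1 * f 0 * 1 := by ring
  -- Step 1: bound LHS by the S-version
  have step1 : (∫ x in Ioi (0:ℝ), Real.exp (-lam * x) * x *
        ∫ ω, (if S ω < x then f (x - L ω) else 0)) ≤
      ∫ x in Ioi (0:ℝ), ∫ ω, F x ω := by
    apply integral_mono_of_nonneg
    · filter_upwards [ae_restrict_mem measurableSet_Ioi] with x hx
      have hx0 : (0:ℝ) < x := hx
      have h1 : 0 ≤ ∫ ω, (if S ω < x then f (x - L ω) else 0) := by
        apply integral_nonneg; intro ω; dsimp only; split_ifs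
        · exact hf_nonneg _
        · exact le_refl 0
      exact mul_nonneg (mul_nonneg (Real.exp_pos _).le hx0.le) h1
    · exact hF.integral_prod_left
    · filter_upwards [ae_restrict_mem measurableSet_Ioi] with x hx
      have hx0 : (0:ℝ) < x := hx
      have hintL : Integrable (fun ω => if S ω < x then f (x - L ω) else 0) := by
        apply Integrable.mono' (integrable_const (f 0))
        · exact (Measurable.ite (measurableSet_lt hS measurable_const)
            (hfm.comp (measurable_const.sub hL)) measurable_const).aestronglyMeasurable
        · refine Filter.Eventually.of_forall fun ω => ?_
          rw [Real.norm_eq_abs]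
          split_ifs with h
          · rw [abs_of_nonneg (hf_nonneg _)]; exact hf_bdd _
          · simpa using hf0
      have hintS : Integrable (fun ω => if S ω < x then f (x - S ω) else 0) := by
        apply Integrable.mono' (integrable_const (f 0))
        · exact (Measurable.ite (measurableSet_lt hS measurable_const)
            (hfm.comp (measurable_const.sub hS)) measurable_const).aestronglyMeasurable
        · refine Filter.Eventually.of_forall fun ω => ?_
          rw [Real.norm_eq_abs]
          split_ifs with h
          · rw [abs_of_nonneg (hf_nonneg _)]; exact hf_bdd _
          · simpa using hf0
      have hinner : (∫ ω, (if S ω < x then f (x - L ω) else 0)) ≤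
          ∫ ω, (if S ω < x then f (x - S ω) else 0) := by
        apply integral_mono_ae hintL hintS
        filter_upwards [hLS] with ω h
        split_ifs with hc
        · exact hf_anti (by linarith)
        · exact le_refl 0
      calc Real.exp (-lam * x) * x * ∫ ω, (if S ω < x then f (x - L ω) else 0)
          ≤ Real.exp (-lam * x) * x * ∫ ω, (if S ω < x then f (x - S ω) else 0) :=
            mul_le_mul_of_nonneg_left hinner (by positivity)
        _ = ∫ ω, F x ω := by rw [hF_def]; rw [integral_const_mul]
  -- Step 2: swap order
  have step2 : (∫ x in Ioi (0:ℝ), ∫ ω, F x ω) = ∫ ω, ∫ x in Ioi (0:ℝ), F x ω := by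
    exact integral_integral_swap hF
  -- Step 3: compute the inner integral for a.e. ω
  have step3 : ∀ᵐ ω, (∫ x in Ioi (0:ℝ), F x ω) =
      Real.exp (-lam * S ω) * A + S ω * Real.exp (-lam * S ω) * B := by
    filter_upwards [hS0] with ω hs
    set s : ℝ := S ω with hs_def
    have e1 : (∫ x in Ioi (0:ℝ), F x ω) =
        ∫ x in Ioi s, Real.exp (-lam * x) * x * f (x - s) := by
      have : ∀ x, F x ω =
          (Ioi s).indicator (fun x => Real.exp (-lam * x) * x * f (x - s)) x := by
        intro x
        simp only [hF_def, indicator, mem_Ioi]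
        split_ifs with h
        · rfl
        · exact mul_zero _
      simp only [this]
      rw [setIntegral_indicator measurableSet_Ioi, Ioi_inter_Ioi, max_eq_right hs]
    have e2 : (∫ x in Ioi s, Real.exp (-lam * x) * x * f (x - s)) =
        ∫ y in Ioi (0:ℝ), Real.exp (-lam * (y + s)) * (y + s) * f y := by
      rw [← integral_indicator measurableSet_Ioi, ← integral_indicator measurableSet_Ioi]
      rw [← integral_add_right_eq_self
        (fun x => (Ioi s).indicator (fun x => Real.exp (-lam * x) * x * f (x - s)) x) s]
      congr 1; ext y
      simp only [indicator, mem_Ioi]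
      by_cases h : 0 < y
      · rw [if_pos (by linarith : s < y + s), if_pos h, add_sub_cancel_right]
      · rw [if_neg (fun hc => h (by linarith)), if_neg h]
    have e3 : (∫ y in Ioi (0:ℝ), Real.exp (-lam * (y + s)) * (y + s) * f y) =
        Real.exp (-lam * s) * A + s * Real.exp (-lam * s) * B := by
      have heq : ∀ y, Real.exp (-lam * (y + s)) * (y + s) * f y =
          Real.exp (-lam * s) * (Real.exp (-lam * y) * (y * f y))
            + (s * Real.exp (-lam * s)) * (Real.exp (-lam * y) * f y) := by
        intro y
        have : Real.exp (-lam * (y + s)) = Real.exp (-lam * y) * Real.exp (-lam * s) := by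
          rw [← Real.exp_add]; ring_nf
        rw [this]; ring
      simp only [heq]
      rw [integral_add ((hA.const_mul _)) ((hB.const_mul _)),
        integral_const_mul, integral_const_mul, ← hA_def, ← hB_def]
    rw [e1, e2, e3]
  -- Step 4: conclude
  have step4 : (∫ ω, ∫ x in Ioi (0:ℝ), F x ω) =
      (∫ ω, Real.exp (-lam * S ω)) * A + (∫ ω, S ω * Real.exp (-lam * S ω)) * B := by
    rw [integral_congr_ae step3,
      integral_add (hexpS.mul_const A) (hSexpS.mul_const B),
      integral_mul_const, integral_mul_const]
  calc (∫ x in Ioi (0:ℝ), Real.exp (-lam * x) * x *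
        ∫ ω, (if S ω < x then f (x - L ω) else 0))
      ≤ ∫ x in Ioi (0:ℝ), ∫ ω, F x ω := step1
    _ = ∫ ω, ∫ x in Ioi (0:ℝ), F x ω := step2
    _ = (∫ ω, Real.exp (-lam * S ω)) * A + (∫ ω, S ω * Real.exp (-lam * S ω)) * B := step4
end
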